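/- If the rank of n equals 2, then n = 2^a·3^b·5^c for some nonnegative integers a, b, c with a + b + c > 0 and c < 6. -/
import Mathlib


/-- `CanRepr n k` : `n` can be written as an expression in `1, +, ·` using `k` ones. -/
inductive CanRepr : ℕ → ℕ → Prop
  | one : CanRepr 1 1
  | add {a b j k : ℕ} : CanRepr a j → CanRepr b k → CanRepr (a + b) (j + k)
  | mul {a b j k : ℕ} : CanRepr a j → CanRepr b k → CanRepr (a * b) (j + k)

/-- Integer complexity `‖n‖`: least number of ones in an expression for `n`. -/
noncomputable def cpx (n : ℕ) : ℕ := sInf {k | CanRepr n k}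

/-- Expressions over `{1, +, ·}`. -/
inductive Expr : Type
  | one : Expr
  | add : Expr → Expr → Expr
  | mul : Expr → Expr → Expr

namespace Expr

/-- Value of an expression. -/
def val : Expr → ℕ
  | one => 1
  | add a b => a.val + b.val
  | mul a b => a.val * b.val

/-- Number of ones in an expression. -/
def ones : Expr → ℕ
  | one => 1
  | add a b => a.ones + b.ones
  | mul a b => a.ones + b.ones

mutual
/-- Height of the subtree, assuming the parent node is an addition
(so a top-level addition is merged with the parent). -/
def heightA : Expr → ℕ
  | one => 0
  | add a b => max (heightA a) (heightA b)
  | mul a b => 1 + max (heightM a) (heightM b)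
/-- Height of the subtree, assuming the parent node is a multiplication. -/
def heightM : Expr → ℕ
  | one => 0
  | add a b => 1 + max (heightA a) (heightA b)
  | mul a b => max (heightM a) (heightM b)
end

/-- Height of an expression, where adjacent identical (variadic) operations
are merged into a single node. -/
def height : Expr → ℕ
  | one => 0
  | add a b => 1 + max (heightA a) (heightA b)
  | mul a b => 1 + max (heightM a) (heightM b)

end Expr

/-- The rank of `n`: minimal height among shortest expressions for `n`. -/
noncomputable def rank (n : ℕ) : ℕ :=
  sInf {h | ∃ t : Expr, t.val = n ∧ t.ones = cpx n ∧ t.height = h}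


section Aux

/-- Sum of prime factors with multiplicity. -/
def sfac (n : ℕ) : ℕ := (Nat.primeFactorsList n).sum

lemma sfac_one : sfac 1 = 0 := by simp [sfac]

lemma sfac_prime {p : ℕ} (hp : p.Prime) : sfac p = p := by
  simp [sfac, Nat.primeFactorsList_prime hp]

lemma sfac_mul {a b : ℕ} (ha : a ≠ 0) (hb : b ≠ 0) :
    sfac (a * b) = sfac a + sfac b := by
  have := (Nat.perm_primeFactorsList_mul ha hb).sum_eq
  simpa [sfac, List.sum_append] using this

lemma sfac_le_self : ∀ n : ℕ, 1 ≤ n → sfac n ≤ n := by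
  intro n
  induction n using Nat.strong_induction_on with
  | _ n ih =>
    intro hn
    rcases eq_or_lt_of_le hn with h1 | h2
    · simp [← h1, sfac_one]
    · set p := n.minFac with hp
      have hpp : p.Prime := Nat.minFac_prime (by omega)
      have hdvd : p ∣ n := Nat.minFac_dvd n
      obtain ⟨m, hm⟩ := hdvd
      have hm0 : m ≠ 0 := by rintro rfl; omega
      rcases Nat.eq_or_lt_of_le (Nat.one_le_iff_ne_zero.mpr hm0) with h1 | hm2
      · rw [hm, ← h1, mul_one, sfac_prime hpp]
      · have hp2 : 2 ≤ p := hpp.two_le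
        have hmn : m < n := by
          rw [hm]; nlinarith
        have := ih m hmn (by omega)
        rw [hm, sfac_mul hpp.ne_zero hm0, sfac_prime hpp]
        nlinarith

lemma canRepr_self : ∀ n : ℕ, 1 ≤ n → CanRepr n n := by
  intro n
  induction n with
  | zero => omega
  | succ k ih =>
    intro _
    rcases Nat.eq_zero_or_pos k with rfl | hk
    · exact CanRepr.one
    · exact CanRepr.add (ih hk) CanRepr.one

lemma canRepr_pos {n k : ℕ} (h : CanRepr n k) : 1 ≤ n ∧ 1 ≤ k := by
  induction h with
  | one => omega
  | add _ _ ih1 ih2 => omega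
  | mul _ _ ih1 ih2 => constructor <;> nlinarith [ih1.1, ih1.2, ih2.1, ih2.2]

lemma cpx_le {n k : ℕ} (h : CanRepr n k) : cpx n ≤ k := Nat.sInf_le h

lemma canRepr_cpx {n : ℕ} (hn : 1 ≤ n) : CanRepr n (cpx n) :=
  Nat.sInf_mem ⟨n, canRepr_self n hn⟩

lemma cpx_le_self {n : ℕ} (hn : 1 ≤ n) : cpx n ≤ n := cpx_le (canRepr_self n hn)

lemma cpx_pos {n : ℕ} (hn : 1 ≤ n) : 1 ≤ cpx n := (canRepr_pos (canRepr_cpx hn)).2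

lemma cpx_add_le {a b : ℕ} (ha : 1 ≤ a) (hb : 1 ≤ b) :
    cpx (a + b) ≤ cpx a + cpx b :=
  cpx_le (CanRepr.add (canRepr_cpx ha) (canRepr_cpx hb))

lemma cpx_mul_le {a b : ℕ} (ha : 1 ≤ a) (hb : 1 ≤ b) :
    cpx (a * b) ≤ cpx a + cpx b :=
  cpx_le (CanRepr.mul (canRepr_cpx ha) (canRepr_cpx hb))

lemma cpx_le_pred {n : ℕ} (hn : 6 ≤ n) : cpx n ≤ n - 1 := by
  have h4 : cpx 2 ≤ 2 := cpx_le_self (by omega)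
  rcases Nat.even_or_odd n with ⟨m, hm⟩ | ⟨m, hm⟩
  · have hn2 : n = 2 * m := by omega
    subst hn2
    have hm3 : 3 ≤ m := by omega
    have h1 : cpx (2 * m) ≤ cpx 2 + cpx m := cpx_mul_le (by omega) (by omega)
    have h2 : cpx m ≤ m := cpx_le_self (by omega)
    omega
  · subst hm
    have hm3 : 3 ≤ m := by omega
    have h1 : cpx (2 * m) ≤ cpx 2 + cpx m := cpx_mul_le (by omega) (by omega)
    have h2 : cpx (2 * m + 1) ≤ cpx (2 * m) + cpx 1 :=
      cpx_add_le (by omega) (by omega)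
    have h3 : cpx 1 ≤ 1 := cpx_le_self (by omega)
    have h5 : cpx m ≤ m := cpx_le_self (by omega)
    omega

lemma cpx_le_sfac : ∀ n : ℕ, 2 ≤ n → cpx n ≤ sfac n := by
  intro n
  induction n using Nat.strong_induction_on with
  | _ n ih =>
    intro hn
    set p := n.minFac with hp
    have hpp : p.Prime := Nat.minFac_prime (by omega)
    have hp2 : 2 ≤ p := hpp.two_le
    obtain ⟨m, hm⟩ := Nat.minFac_dvd n
    rw [← hp] at hm
    have hm0 : m ≠ 0 := by rintro rfl; omega
    rcases Nat.eq_or_lt_of_le (Nat.one_le_iff_ne_zero.mpr hm0) with h1 | hm2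
    · rw [hm, ← h1, mul_one, sfac_prime hpp]
      exact cpx_le_self (by omega)
    ·
      have hmn : m < n := by rw [hm]; nlinarith
      have h1 := ih m hmn hm2
      have h2 : cpx (p * m) ≤ cpx p + cpx m := cpx_mul_le (by omega) (by omega)
      have h3 : cpx p ≤ p := cpx_le_self (by omega)
      rw [hm, sfac_mul hpp.ne_zero hm0, sfac_prime hpp]
      omega

lemma cpx_15625 : cpx 15625 ≤ 29 := by
  have c1 : CanRepr 1 1 := .one
  have c2 : CanRepr 2 2 := .add c1 c1
  have c3 : CanRepr 3 3 := .add c1 c2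
  have c8 : CanRepr 8 6 := .mul c2 (.mul c2 c2)
  have c9 : CanRepr 9 6 := .mul c3 c3
  have c27 : CanRepr 27 9 := .mul c3 c9
  have c216 : CanRepr 216 15 := .mul c8 c27
  have c217 : CanRepr 217 16 := .add c1 c216
  have c72 : CanRepr 72 12 := .mul c8 c9
  have c15624 : CanRepr 15624 28 := .mul c72 c217
  exact cpx_le (.add c1 c15624)

lemma sfac_15625 : sfac 15625 = 30 := by
  have s5 : sfac 5 = 5 := sfac_prime (by norm_num)
  have s25 : sfac 25 = 10 := by
    rw [show (25 : ℕ) = 5 * 5 by norm_num, sfac_mul (by norm_num) (by norm_num), s5]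
  have s625 : sfac 625 = 20 := by
    rw [show (625 : ℕ) = 25 * 25 by norm_num, sfac_mul (by norm_num) (by norm_num), s25]
  rw [show (15625 : ℕ) = 625 * 25 by norm_num, sfac_mul (by norm_num) (by norm_num), s625, s25]

namespace Expr

lemma val_pos : ∀ t : Expr, 1 ≤ t.val := by
  intro t
  induction t with
  | one => simp [val]
  | add a b iha ihb => simp only [val]; omega
  | mul a b iha ihb => simp only [val]; nlinarith

lemma ones_pos : ∀ t : Expr, 1 ≤ t.ones := by
  intro t
  induction t with
  | one => simp [ones]
  | add a b iha ihb => simp only [ones]; omega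
  | mul a b iha ihb => simp only [ones]; omega

lemma val_of_heightM_zero : ∀ t : Expr, t.heightM = 0 → t.val = 1 := by
  intro t
  induction t with
  | one => simp [val]
  | add a b iha ihb => simp [heightM]
  | mul a b iha ihb =>
    simp only [heightM, val, Nat.max_eq_zero_iff]
    rintro ⟨h1, h2⟩
    rw [iha h1, ihb h2]

lemma ones_of_heightA_zero : ∀ t : Expr, t.heightA = 0 → t.ones = t.val := by
  intro t
  induction t with
  | one => simp [val, ones]
  | add a b iha ihb =>
    simp only [heightA, val, ones, Nat.max_eq_zero_iff]
    rintro ⟨h1, h2⟩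
    rw [iha h1, ihb h2]
  | mul a b iha ihb => simp [heightA]

lemma val_le_ones_of_heightA_le_one : ∀ t : Expr, t.heightA ≤ 1 → t.val ≤ t.ones := by
  intro t
  induction t with
  | one => simp [val, ones]
  | add a b iha ihb =>
    simp only [heightA, val, ones, max_le_iff]
    rintro ⟨h1, h2⟩
    exact Nat.add_le_add (iha h1) (ihb h2)
  | mul a b iha ihb =>
    simp only [heightA, val, ones]
    intro h
    have h1 : a.heightM = 0 := by omega
    have h2 : b.heightM = 0 := by omega
    rw [val_of_heightM_zero a h1, val_of_heightM_zero b h2]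
    have := ones_pos a
    have := ones_pos b
    omega

lemma sfac_val_le_ones_of_heightM_le_one : ∀ t : Expr, t.heightM ≤ 1 → sfac t.val ≤ t.ones := by
  intro t
  induction t with
  | one => simp [val, ones, sfac_one]
  | add a b iha ihb =>
    simp only [heightM, val, ones]
    intro h
    have h1 : a.heightA = 0 := by omega
    have h2 : b.heightA = 0 := by omega
    have hv : a.val + b.val ≤ a.ones + b.ones := by
      rw [ones_of_heightA_zero a h1, ones_of_heightA_zero b h2]
    calc sfac (a.val + b.val) ≤ a.val + b.val := by
          apply sfac_le_self
          have := val_pos a; have := val_pos b; omega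
      _ ≤ a.ones + b.ones := hv
  | mul a b iha ihb =>
    simp only [heightM, val, ones, max_le_iff]
    rintro ⟨h1, h2⟩
    rw [sfac_mul (by have := val_pos a; omega) (by have := val_pos b; omega)]
    exact Nat.add_le_add (iha h1) (ihb h2)

lemma sfac_val_le_ones_of_height_le_two (t : Expr) (h : t.height ≤ 2) :
    sfac t.val ≤ t.ones := by
  cases t with
  | one => simp [val, ones, sfac_one]
  | add a b =>
    simp only [height, max_le_iff] at h
    have h1 : a.heightA ≤ 1 := by omega
    have h2 : b.heightA ≤ 1 := by omega
    have hv : (Expr.add a b).val ≤ (Expr.add a b).ones :=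
      Nat.add_le_add (val_le_ones_of_heightA_le_one a h1) (val_le_ones_of_heightA_le_one b h2)
    exact le_trans (sfac_le_self _ (val_pos _)) hv
  | mul a b =>
    simp only [height, max_le_iff] at h
    simp only [val, ones]
    rw [sfac_mul (by have := val_pos a; omega) (by have := val_pos b; omega)]
    exact Nat.add_le_add (sfac_val_le_ones_of_heightM_le_one a (by omega))
      (sfac_val_le_ones_of_heightM_le_one b (by omega))

end Expr

lemma only235 : ∀ n : ℕ, 1 ≤ n → (∀ p : ℕ, p.Prime → p ∣ n → p ≤ 5) →
    ∃ a b c : ℕ, n = 2 ^ a * 3 ^ b * 5 ^ c := by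
  intro n
  induction n using Nat.strong_induction_on with
  | _ n ih =>
    intro hn hsm
    rcases eq_or_lt_of_le hn with h1 | h2
    · exact ⟨0, 0, 0, by omega⟩
    · set p := n.minFac with hp
      have hpp : p.Prime := Nat.minFac_prime (by omega)
      obtain ⟨m, hm⟩ := Nat.minFac_dvd n
      have hm0 : m ≠ 0 := by rintro rfl; omega
      rw [← hp] at hm
      have hp2 : 2 ≤ p := hpp.two_le
      have hmn : m < n := by rw [hm]; nlinarith [Nat.one_le_iff_ne_zero.mpr hm0]
      obtain ⟨a, b, c, habc⟩ := ih m hmn (Nat.one_le_iff_ne_zero.mpr hm0)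
        (fun q hq hqm => hsm q hq (by rw [hm]; exact hqm.mul_left _))
      have hple : p ≤ 5 := by rw [hp]; exact hsm _ hpp (Nat.minFac_dvd n)
      have h235 : p = 2 ∨ p = 3 ∨ p = 5 := by
        have h4 : p ≠ 4 := fun hh => by rw [hh] at hpp; norm_num at hpp
        omega
      rcases h235 with hh | hh | hh <;> rw [hh] at hm
      · exact ⟨a + 1, b, c, by rw [hm, habc]; ring⟩
      · exact ⟨a, b + 1, c, by rw [hm, habc]; ring⟩
      · exact ⟨a, b, c + 1, by rw [hm, habc]; ring⟩

end Aux

theorem rank_two' (n : ℕ) (h : rank n = 2) :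
    ∃ a b c : ℕ, n = 2 ^ a * 3 ^ b * 5 ^ c ∧ 0 < a + b + c ∧ c < 6 := by
  unfold rank at h
  have hne : {h | ∃ t : Expr, t.val = n ∧ t.ones = cpx n ∧ t.height = h}.Nonempty := by
    by_contra h'
    rw [Set.not_nonempty_iff_eq_empty] at h'
    rw [h', Nat.sInf_empty] at h
    omega
  obtain ⟨t, hval, hones, hht⟩ : ∃ t : Expr, t.val = n ∧ t.ones = cpx n ∧ t.height = 2 := by
    have := Nat.sInf_mem hne
    rwa [h] at this
  have hn1 : 1 ≤ n := hval ▸ Expr.val_pos t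
  -- n ≠ 1
  have hn2 : 2 ≤ n := by
    rcases eq_or_lt_of_le hn1 with h1 | h1
    · exfalso
      have hcpx1 : cpx 1 = 1 :=
        le_antisymm (cpx_le CanRepr.one) (cpx_pos le_rfl)
      have h0 : (0 : ℕ) ∈ {h | ∃ t : Expr, t.val = n ∧ t.ones = cpx n ∧ t.height = h} :=
        ⟨Expr.one, by simp [Expr.val, ← h1], by simp [Expr.ones, ← h1, hcpx1], rfl⟩
      have := Nat.sInf_le h0
      omega
    · omega
  -- key inequality
  have hkey : sfac n ≤ cpx n := by
    have := Expr.sfac_val_le_ones_of_height_le_two t (by omega)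
    rwa [hval, hones] at this
  -- no prime factor > 5
  have hsm : ∀ p : ℕ, p.Prime → p ∣ n → p ≤ 5 := by
    intro p hpp hpn
    by_contra hgt
    push_neg at hgt
    have hp7 : 7 ≤ p := by
      rcases Nat.lt_or_ge p 7 with h' | h'
      · interval_cases p <;> first | omega | exact absurd hpp (by norm_num)
      · exact h'
    obtain ⟨m, hm⟩ := hpn
    have hm0 : m ≠ 0 := by rintro rfl; omega
    have hcp : cpx p ≤ p - 1 := cpx_le_pred (by omega)
    rcases Nat.eq_or_lt_of_le (Nat.one_le_iff_ne_zero.mpr hm0) with h1 | hm2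
    · rw [hm, ← h1, mul_one] at hkey
      rw [sfac_prime hpp] at hkey
      omega
    · have h1 : cpx n ≤ cpx p + cpx m := hm ▸ cpx_mul_le (by omega) (by omega)
      have h2 : cpx m ≤ sfac m := cpx_le_sfac m hm2
      have h3 : sfac n = p + sfac m := by
        rw [hm, sfac_mul hpp.ne_zero hm0, sfac_prime hpp]
      omega
  -- 5^6 does not divide n
  have h56 : ¬ (15625 ∣ n) := by
    rintro ⟨m, hm⟩
    have hm0 : m ≠ 0 := by rintro rfl; omega
    rcases Nat.eq_or_lt_of_le (Nat.one_le_iff_ne_zero.mpr hm0) with h1 | hm2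
    · rw [hm, ← h1, mul_one] at hkey
      rw [sfac_15625] at hkey
      have := cpx_15625
      omega
    · have h1 : cpx n ≤ cpx 15625 + cpx m := hm ▸ cpx_mul_le (by omega) (by omega)
      have h2 : cpx m ≤ sfac m := cpx_le_sfac m hm2
      have h3 : sfac n = 30 + sfac m := by
        rw [hm, sfac_mul (by norm_num) hm0, sfac_15625]
      have := cpx_15625
      omega
  obtain ⟨a, b, c, habc⟩ := only235 n hn1 hsm
  refine ⟨a, b, c, habc, ?_, ?_⟩
  · rcases Nat.eq_zero_or_pos (a + b + c) with h' | h'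
    · obtain ⟨rfl, rfl, rfl⟩ : a = 0 ∧ b = 0 ∧ c = 0 := by omega
      simp at habc
      omega
    · exact h'
  · by_contra h'
    push_neg at h'
    apply h56
    rw [habc]
    have : (15625 : ℕ) = 5 ^ 6 := by norm_num
    rw [this]
    exact Dvd.dvd.mul_left (pow_dvd_pow 5 h') _

theorem rank_two (n : ℕ) (h : rank n = 2) :
    ∃ a b c : ℕ, n = 2 ^ a * 3 ^ b * 5 ^ c ∧ 0 < a + b + c ∧ c < 6 := rank_two' n h
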